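/- Let G₁ and G₂ be sub-σ-fields of σ(X) such that Y ⊥⊥ X | G₁ and Y ⊥⊥ X | G₂, and such that the class of G₁-measurable functions and the class of G₂-measurable functions are both complete (i.e., for i = 1, 2, every Gᵢ-measurable f ∈ L²(μ) with μ[f|σ(Y)] = 0 μ-a.e. satisfies f = 0 μ-a.e.). Then for every f ∈ L²(μ): f is μ-a.e. equal to a G₁-measurable function if and only if f is μ-a.e. equal to a G₂-measurable function. -/

import Mathlib

/-!
Sufficiency of `G` gives `μ[1_B|σ(X)] = μ[1_B|G]` for `B ∈ σ(Y)`, so replacing a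
`σ(X)`-measurable `h` by `μ[h|G]` does not change `μ[h|σ(Y)]`. For a `G₁`-measurable
`g ∈ L²`, the functions `g` and `μ[μ[g|G₂]|G₁]` thus have the same conditional expectation
given `σ(Y)`, and completeness of `G₁` makes them equal. As conditional expectations are
orthogonal projections of `L²`, `P₁ P₂ g = g = P₁ g` forces `P₂ g = g`: `g` is a.e.
`G₂`-measurable.
-/

open MeasureTheory ProbabilityTheory

/-- `Y ⊥⊥ X | G` : conditional independence of `Y` and `X` given a sub-σ-field `G`,
as defined in the paper: for all `A ∈ σ(X)` and `B ∈ σ(Y)`,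
`μ[1_{A∩B}|G] = μ[1_A|G] ⬝ μ[1_B|G]` a.e.  The ambient σ-field `mΩ` is explicit. -/
def CondIndepSigma {Ω : Type*} (mΩ : MeasurableSpace Ω) (μ : Measure Ω)
    (mX mY G : MeasurableSpace Ω) : Prop :=
  ∀ A : Set Ω, MeasurableSet[mX] A → ∀ B : Set Ω, MeasurableSet[mY] B →
    condExp G (m₀ := mΩ) μ ((A ∩ B).indicator (fun _ => (1 : ℝ))) =ᵐ[μ]
      fun ω => (condExp G (m₀ := mΩ) μ (A.indicator (fun _ => (1 : ℝ)))) ω *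
        (condExp G (m₀ := mΩ) μ (B.indicator (fun _ => (1 : ℝ)))) ω

section

variable {Ω : Type*} {m m₁ m₂ mX mY G G₁ G₂ m₀ : MeasurableSpace Ω} {μ : Measure Ω}
  {f g h d : Ω → ℝ} {s : Set Ω}

lemma setIntegral_eq_integral_mul_indicator_one (hs : MeasurableSet s) (h : Ω → ℝ) :
    ∫ ω in s, h ω ∂μ = ∫ ω, h ω * s.indicator (fun _ => (1 : ℝ)) ω ∂μ := by
  rw [← integral_indicator hs]
  congr 1 with ω
  by_cases hω : ω ∈ s <;> simp [hω]

lemma memLp_indicator_one [IsFiniteMeasure μ] (hs : MeasurableSet s) (p : ENNReal) :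
    MemLp (s.indicator (fun _ => (1 : ℝ))) p μ :=
  (memLp_const 1).indicator hs

lemma integral_mul_condExp [IsFiniteMeasure μ] (hm : m ≤ m₀) (hf : MemLp f 2 μ)
    (hg : MemLp g 2 μ) :
    ∫ ω, f ω * μ[g|m] ω ∂μ = ∫ ω, μ[f|m] ω * μ[g|m] ω ∂μ := by
  have hfg : Integrable (f * μ[g|m]) μ := hf.integrable_mul (hg.condExp one_le_two)
  calc ∫ ω, f ω * μ[g|m] ω ∂μ = ∫ ω, μ[f * μ[g|m]|m] ω ∂μ := (integral_condExp hm).symm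
    _ = ∫ ω, μ[f|m] ω * μ[g|m] ω ∂μ :=
      integral_congr_ae (condExp_mul_of_stronglyMeasurable_right stronglyMeasurable_condExp hfg
        (hf.integrable one_le_two))

lemma integral_mul_condExp_eq_integral_condExp_mul [IsFiniteMeasure μ] (hm : m ≤ m₀)
    (hf : MemLp f 2 μ) (hg : MemLp g 2 μ) :
    ∫ ω, f ω * μ[g|m] ω ∂μ = ∫ ω, μ[f|m] ω * g ω ∂μ := by
  simp_rw [integral_mul_condExp hm hf hg, mul_comm _ (g _), integral_mul_condExp hm hg hf,
    mul_comm]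

lemma integral_mul_eq_zero_of_condExp_eq_zero [IsFiniteMeasure μ] (hm : m ≤ m₀)
    (hg : StronglyMeasurable[m] g) (hg2 : MemLp g 2 μ) (hd2 : MemLp d 2 μ) (hd : μ[d|m] =ᵐ[μ] 0) :
    ∫ ω, g ω * d ω ∂μ = 0 := by
  calc ∫ ω, g ω * d ω ∂μ = ∫ ω, μ[g|m] ω * d ω ∂μ := by
        rw [condExp_of_stronglyMeasurable hm hg (hg2.integrable one_le_two)]
    _ = ∫ ω, g ω * μ[d|m] ω ∂μ := (integral_mul_condExp_eq_integral_condExp_mul hm hg2 hd2).symm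
    _ = ∫ ω, g ω * (0 : Ω → ℝ) ω ∂μ :=
        integral_congr_ae (hd.mono fun ω hω => congrArg (g ω * ·) hω)
    _ = 0 := by simp

lemma ae_eq_zero_of_integral_mul_self_eq_zero (hd2 : MemLp d 2 μ)
    (hd : ∫ ω, d ω * d ω ∂μ = 0) : d =ᵐ[μ] 0 := by
  have hsq : (fun ω => d ω * d ω) =ᵐ[μ] 0 :=
    (integral_eq_zero_iff_of_nonneg (fun ω => mul_self_nonneg (d ω))
      (hd2.integrable_mul hd2)).mp hd
  filter_upwards [hsq] with ω hω using mul_self_eq_zero.mp hω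

/-- `d = f - μ[f|m₂]` is orthogonal to `f` (as `μ[d|m₁] = 0`) and to `μ[f|m₂]`, hence to
itself. -/
lemma condExp_ae_eq_self_of_condExp_condExp_ae_eq [IsFiniteMeasure μ] (hm₁ : m₁ ≤ m₀)
    (hm₂ : m₂ ≤ m₀) (hf : StronglyMeasurable[m₁] f) (hf2 : MemLp f 2 μ)
    (h : μ[μ[f|m₂]|m₁] =ᵐ[μ] f) : μ[f|m₂] =ᵐ[μ] f := by
  set g := μ[f|m₂]
  have hg2 : MemLp g 2 μ := hf2.condExp one_le_two
  have hf1 : Integrable f μ := hf2.integrable one_le_two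
  have hd₁ : μ[f - g|m₁] =ᵐ[μ] 0 := by
    filter_upwards [condExp_sub (m := m₁) hf1 (integrable_condExp (m := m₂) (f := f)), h]
      with ω hsub hω
    simp [hsub, hω, g, condExp_of_stronglyMeasurable hm₁ hf hf1]
  have hd₂ : μ[f - g|m₂] =ᵐ[μ] 0 := by
    filter_upwards [condExp_sub (m := m₂) hf1 (integrable_condExp (m := m₂) (f := f))]
      with ω hsub
    simp [hsub, g, condExp_of_stronglyMeasurable hm₂ stronglyMeasurable_condExp integrable_condExp]
  have hd : ∫ ω, (f - g) ω * (f - g) ω ∂μ = 0 := calc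
    _ = ∫ ω, f ω * (f - g) ω - g ω * (f - g) ω ∂μ :=
        integral_congr_ae (.of_forall fun ω => sub_mul (f ω) (g ω) _)
    _ = ∫ ω, f ω * (f - g) ω ∂μ - ∫ ω, g ω * (f - g) ω ∂μ :=
        integral_sub (hf2.integrable_mul (hf2.sub hg2)) (hg2.integrable_mul (hf2.sub hg2))
    _ = 0 := by
        rw [integral_mul_eq_zero_of_condExp_eq_zero hm₁ hf hf2 (hf2.sub hg2) hd₁,
          integral_mul_eq_zero_of_condExp_eq_zero hm₂ stronglyMeasurable_condExp hg2
            (hf2.sub hg2) hd₂, sub_zero]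
  filter_upwards [ae_eq_zero_of_integral_mul_self_eq_zero (hf2.sub hg2) hd] with ω hω
  exact (sub_eq_zero.mp hω).symm

lemma condExp_indicator_ae_eq_of_condIndepSigma [IsFiniteMeasure μ] (hmX : mX ≤ m₀)
    (hmY : mY ≤ m₀) (hG : G ≤ mX) (hCI : CondIndepSigma m₀ μ mX mY G) {B : Set Ω}
    (hB : MeasurableSet[mY] B) :
    μ[B.indicator (fun _ => (1 : ℝ))|mX] =ᵐ[μ] μ[B.indicator (fun _ => (1 : ℝ))|G] := by
  refine (ae_eq_condExp_of_forall_setIntegral_eq hmX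
    ((memLp_indicator_one (hmY B hB) 1).integrable le_rfl)
    (fun s _ _ => integrable_condExp.integrableOn) (fun s hs _ => ?_)
    (stronglyMeasurable_condExp.mono hG).aestronglyMeasurable).symm
  have hGm₀ : G ≤ m₀ := hG.trans hmX
  calc ∫ ω in s, μ[B.indicator (fun _ => (1 : ℝ))|G] ω ∂μ
      = ∫ ω, μ[s.indicator (fun _ => (1 : ℝ))|G] ω * μ[B.indicator (fun _ => (1 : ℝ))|G] ω ∂μ := by
        rw [setIntegral_eq_integral_mul_indicator_one (hmX s hs), ← integral_mul_condExp hGm₀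
          (memLp_indicator_one (hmX s hs) 2) (memLp_indicator_one (hmY B hB) 2)]
        simp_rw [mul_comm]
    _ = ∫ ω, μ[(s ∩ B).indicator (fun _ => (1 : ℝ))|G] ω ∂μ :=
        (integral_congr_ae (hCI s hs B hB)).symm
    _ = ∫ ω in s, B.indicator (fun _ => (1 : ℝ)) ω ∂μ := by
        rw [integral_condExp hGm₀, ← Set.indicator_indicator, integral_indicator (hmX s hs)]

lemma condExp_condExp_ae_eq_of_condIndepSigma [IsFiniteMeasure μ] (hmX : mX ≤ m₀)
    (hmY : mY ≤ m₀) (hG : G ≤ mX) (hCI : CondIndepSigma m₀ μ mX mY G)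
    (hh : StronglyMeasurable[mX] h) (hh2 : MemLp h 2 μ) :
    μ[μ[h|G]|mY] =ᵐ[μ] μ[h|mY] := by
  refine ae_eq_condExp_of_forall_setIntegral_eq hmY (hh2.integrable one_le_two)
    (fun s _ _ => integrable_condExp.integrableOn) (fun B hB _ => ?_)
    stronglyMeasurable_condExp.aestronglyMeasurable
  have hGm₀ : G ≤ m₀ := hG.trans hmX
  have hB2 : MemLp (B.indicator (fun _ => (1 : ℝ))) 2 μ := memLp_indicator_one (hmY B hB) 2
  calc ∫ ω in B, μ[μ[h|G]|mY] ω ∂μ = ∫ ω in B, μ[h|G] ω ∂μ :=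
        setIntegral_condExp hmY integrable_condExp hB
    _ = ∫ ω, h ω * μ[B.indicator (fun _ => (1 : ℝ))|G] ω ∂μ := by
        rw [setIntegral_eq_integral_mul_indicator_one (hmY B hB),
          integral_mul_condExp_eq_integral_condExp_mul hGm₀ hh2 hB2]
    _ = ∫ ω, h ω * μ[B.indicator (fun _ => (1 : ℝ))|mX] ω ∂μ :=
        integral_congr_ae ((condExp_indicator_ae_eq_of_condIndepSigma hmX hmY hG hCI hB).mono
          fun ω hω => congrArg (h ω * ·) hω.symm)
    _ = ∫ ω in B, h ω ∂μ := by
        rw [integral_mul_condExp_eq_integral_condExp_mul hmX hh2 hB2,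
          condExp_of_stronglyMeasurable hmX hh (hh2.integrable one_le_two),
          setIntegral_eq_integral_mul_indicator_one (hmY B hB)]

lemma condExp_ae_eq_self_of_complete [IsFiniteMeasure μ] (hmX : mX ≤ m₀) (hmY : mY ≤ m₀)
    (hG₁ : G₁ ≤ mX) (hCI₁ : CondIndepSigma m₀ μ mX mY G₁)
    (hcomplete₁ : ∀ f : Ω → ℝ, Measurable[G₁] f → MemLp f 2 μ → μ[f|mY] =ᵐ[μ] 0 → f =ᵐ[μ] 0)
    (hG₂ : G₂ ≤ mX) (hCI₂ : CondIndepSigma m₀ μ mX mY G₂)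
    (hg : Measurable[G₁] g) (hg2 : MemLp g 2 μ) : μ[g|G₂] =ᵐ[μ] g := by
  have hG₁m₀ : G₁ ≤ m₀ := hG₁.trans hmX
  have hG₂m₀ : G₂ ≤ m₀ := hG₂.trans hmX
  set g' := μ[μ[g|G₂]|G₁]
  have hg'2 : MemLp g' 2 μ := (hg2.condExp one_le_two).condExp one_le_two
  have hY : μ[g - g'|mY] =ᵐ[μ] 0 := by
    have hg₂ := condExp_condExp_ae_eq_of_condIndepSigma hmX hmY hG₂ hCI₂
      (hg.stronglyMeasurable.mono hG₁) hg2
    have hg₁ := condExp_condExp_ae_eq_of_condIndepSigma hmX hmY hG₁ hCI₁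
      (stronglyMeasurable_condExp.mono hG₂) (hg2.condExp one_le_two)
    filter_upwards [condExp_sub (m := mY) (hg2.integrable one_le_two)
      (hg'2.integrable one_le_two), hg₁, hg₂] with ω hsub h₁ h₂
    simp [hsub, h₁, ← h₂, g']
  have hgg' : g' =ᵐ[μ] g := by
    filter_upwards [hcomplete₁ _ (hg.sub stronglyMeasurable_condExp.measurable) (hg2.sub hg'2) hY]
      with ω hω
    exact (sub_eq_zero.mp hω).symm
  exact condExp_ae_eq_self_of_condExp_condExp_ae_eq hG₁m₀ hG₂m₀ hg.stronglyMeasurable hg2 hgg'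

end

/-- Uniqueness of complete and sufficient dimension reduction classes: two complete SDR
classes consist (a.e.) of the same square-integrable functions. -/
theorem complete_sufficient_class_unique
    {Ω EX EY : Type*} [mΩ : MeasurableSpace Ω] [mEX : MeasurableSpace EX]
    [mEY : MeasurableSpace EY]
    (μ : Measure Ω) [IsProbabilityMeasure μ]
    (X : Ω → EX) (Y : Ω → EY) (hX : Measurable X) (hY : Measurable Y)
    (G₁ : MeasurableSpace Ω) (hG₁ : G₁ ≤ MeasurableSpace.comap X mEX)
    (hCI₁ : CondIndepSigma mΩ μ (MeasurableSpace.comap X mEX) (MeasurableSpace.comap Y mEY) G₁)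
    (hcomplete₁ : ∀ f : Ω → ℝ, Measurable[G₁] f → MemLp f 2 μ →
      (μ[f|MeasurableSpace.comap Y mEY] =ᵐ[μ] 0) → f =ᵐ[μ] 0)
    (G₂ : MeasurableSpace Ω) (hG₂ : G₂ ≤ MeasurableSpace.comap X mEX)
    (hCI₂ : CondIndepSigma mΩ μ (MeasurableSpace.comap X mEX) (MeasurableSpace.comap Y mEY) G₂)
    (hcomplete₂ : ∀ f : Ω → ℝ, Measurable[G₂] f → MemLp f 2 μ →
      (μ[f|MeasurableSpace.comap Y mEY] =ᵐ[μ] 0) → f =ᵐ[μ] 0)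
    (f : Ω → ℝ) (hf2 : MemLp f 2 μ) :
    (∃ g : Ω → ℝ, Measurable[G₁] g ∧ f =ᵐ[μ] g) ↔
      (∃ g : Ω → ℝ, Measurable[G₂] g ∧ f =ᵐ[μ] g) := by
  constructor
  · rintro ⟨g, hg, hfg⟩
    exact ⟨μ[g|G₂], stronglyMeasurable_condExp.measurable, hfg.trans <| .symm <|
      condExp_ae_eq_self_of_complete hX.comap_le hY.comap_le hG₁ hCI₁ hcomplete₁ hG₂ hCI₂ hg
        (hf2.ae_eq hfg)⟩
  · rintro ⟨g, hg, hfg⟩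
    exact ⟨μ[g|G₁], stronglyMeasurable_condExp.measurable, hfg.trans <| .symm <|
      condExp_ae_eq_self_of_complete hX.comap_le hY.comap_le hG₂ hCI₂ hcomplete₂ hG₁ hCI₁ hg
        (hf2.ae_eq hfg)⟩
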